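/- arXiv:2011.09319 — 4 statements merged into one kernel-verified Lean document; each statement's English description precedes it below -/
import Mathlib

section
/- If F is a Banach lattice with the weak Dunford–Pettis property and G ⊆ F is a sublattice which is the range of a bounded linear projection P : F → F, then G has the weak Dunford–Pettis property. -/
open Filter Topology

noncomputable section

/-- A set `A` in a normed space is relatively weakly compact if its closure in the weak
topology is compact. -/
def RelWeaklyCompact {Y : Type*} [NormedAddCommGroup Y] [NormedSpace ℝ Y] (A : Set Y) : Prop :=
  IsCompact (closure (toWeakSpace ℝ Y '' A))

/-- A sequence in a normed space is weakly null if it tends to `0` in the weak topology. -/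
def WeaklyNullSeq {F : Type*} [NormedAddCommGroup F] [NormedSpace ℝ F] (x : ℕ → F) : Prop :=
  Tendsto (fun n => toWeakSpace ℝ F (x n)) atTop (𝓝 0)

/-- The weak Dunford–Pettis property of a Banach lattice `F`: every weakly compact operator
from `F` into a Banach space maps disjoint weakly null sequences to norm null sequences. -/
def HasWDP (F : Type*) [NormedAddCommGroup F] [Lattice F] [IsOrderedAddMonoid F] [HasSolidNorm F]
    [NormedSpace ℝ F] : Prop :=
  ∀ (Y : Type) [NormedAddCommGroup Y] [NormedSpace ℝ Y] [CompleteSpace Y],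
    ∀ S : F →L[ℝ] Y, RelWeaklyCompact (S '' Metric.closedBall 0 1) →
      ∀ x : ℕ → F, (Pairwise fun n m => |x n| ⊓ |x m| = 0) → WeaklyNullSeq x →
        Tendsto (fun n => ‖S (x n)‖) atTop (𝓝 0)

/-!
Because `P` projects onto `J(G)`, the map `Q := J⁻¹ ∘ P : F → G` is a bounded left inverse
of `J`. For a weakly compact `S : G → Y`, the operator `S ∘ Q` is weakly compact on `F`, and
the lattice isometry `J` carries a disjoint weakly null sequence `(xₙ)` of `G` to one of `F`;
the weak Dunford–Pettis property of `F` then gives `‖S xₙ‖ = ‖(S ∘ Q) (J xₙ)‖ → 0`.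
-/

namespace RelWeaklyCompact

open scoped Pointwise

variable {Y Z : Type*} [NormedAddCommGroup Y] [NormedSpace ℝ Y]
  [NormedAddCommGroup Z] [NormedSpace ℝ Z]

theorem mono {A B : Set Y} (hA : RelWeaklyCompact A) (hBA : B ⊆ A) : RelWeaklyCompact B :=
  hA.of_isClosed_subset isClosed_closure (closure_mono (Set.image_mono hBA))

theorem image {A : Set Y} (hA : RelWeaklyCompact A) (T : Y →L[ℝ] Z) :
    RelWeaklyCompact (T '' A) := by
  refine (IsCompact.image hA (WeakSpace.map T).continuous).closure_of_subset ?_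
  rintro _ ⟨_, ⟨y, hy, rfl⟩, rfl⟩
  exact ⟨toWeakSpace ℝ Y y, subset_closure (Set.mem_image_of_mem _ hy), rfl⟩

theorem smul {A : Set Y} (hA : RelWeaklyCompact A) (c : ℝ) : RelWeaklyCompact (c • A) := by
  rw [← Set.image_smul]
  exact hA.image (c • ContinuousLinearMap.id ℝ Y)

theorem comp_closedBall {E G : Type*} [NormedAddCommGroup E] [NormedSpace ℝ E]
    [NormedAddCommGroup G] [NormedSpace ℝ G] {S : G →L[ℝ] Y}
    (hS : RelWeaklyCompact (S '' Metric.closedBall 0 1)) (Q : E →L[ℝ] G) :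
    RelWeaklyCompact (S.comp Q '' Metric.closedBall 0 1) := by
  have hQ : Q '' Metric.closedBall 0 1 ⊆ ‖Q‖ • Metric.closedBall (0 : G) 1 := by
    rw [smul_unitClosedBall_of_nonneg (norm_nonneg Q)]
    simpa using (Q.lipschitz.mapsTo_closedBall 0 1).image_subset
  refine (hS.smul ‖Q‖).mono ?_
  rw [ContinuousLinearMap.coe_comp, Set.image_comp, ← image_smul_set]
  exact Set.image_mono hQ

end RelWeaklyCompact

theorem WeaklyNullSeq.map {E F : Type*} [NormedAddCommGroup E] [NormedSpace ℝ E]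
    [NormedAddCommGroup F] [NormedSpace ℝ F] {x : ℕ → E} (hx : WeaklyNullSeq x)
    (T : E →L[ℝ] F) : WeaklyNullSeq (fun n => T (x n)) := by
  unfold WeaklyNullSeq at hx ⊢
  have := ((WeakSpace.map T).continuous.tendsto 0).comp hx
  rwa [map_zero] at this

section SupHom

variable {α β F : Type*} [AddCommGroup α] [Lattice α] [AddCommGroup β] [Lattice β]
  [FunLike F α β] [AddMonoidHomClass F α β] {f : F}

theorem map_inf_of_map_sup [IsOrderedAddMonoid α] [IsOrderedAddMonoid β]
    (hf : ∀ a b, f (a ⊔ b) = f a ⊔ f b) (a b : α) : f (a ⊓ b) = f a ⊓ f b := by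
  rw [← neg_neg (a ⊓ b), neg_inf, map_neg, hf, map_neg, map_neg, neg_sup, neg_neg, neg_neg]

theorem map_abs_of_map_sup (hf : ∀ a b, f (a ⊔ b) = f a ⊔ f b) (a : α) : f |a| = |f a| := by
  rw [abs, abs, hf, map_neg]

theorem abs_inf_abs_map_eq_zero_of_map_sup [IsOrderedAddMonoid α] [IsOrderedAddMonoid β]
    (hf : ∀ a b, f (a ⊔ b) = f a ⊔ f b) {a b : α} (hab : |a| ⊓ |b| = 0) :
    |f a| ⊓ |f b| = 0 := by
  rw [← map_abs_of_map_sup hf, ← map_abs_of_map_sup hf, ← map_inf_of_map_sup hf, hab,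
    map_zero]

end SupHom

theorem LinearIsometry.exists_leftInverse_of_range_eq_range {𝕜 E G : Type*}
    [NontriviallyNormedField 𝕜] [NormedAddCommGroup E] [NormedSpace 𝕜 E]
    [NormedAddCommGroup G] [NormedSpace 𝕜 G]
    (J : G →ₗᵢ[𝕜] E) (P : E →L[𝕜] E) (hproj : ∀ x, P (P x) = P x)
    (hrange : Set.range P = Set.range J) : ∃ Q : E →L[𝕜] G, ∀ g, Q (J g) = g := by
  have hPJ : ∀ g, P (J g) = J g := by
    intro g
    obtain ⟨x, hx⟩ : J g ∈ Set.range P := hrange ▸ ⟨g, rfl⟩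
    rw [← hx, hproj]
  have hmem : ∀ x, P x ∈ LinearMap.range J.toLinearMap := fun x => by
    rw [LinearMap.mem_range]; exact hrange.subset ⟨x, rfl⟩
  exact ⟨(J.equivRange.symm.toContinuousLinearEquiv : _ →L[𝕜] G).comp (P.codRestrict _ hmem),
    fun g => J.equivRange.symm_apply_eq.mpr (Subtype.ext (hPJ g))⟩

theorem stmt_3_general (F G : Type) [NormedAddCommGroup F] [Lattice F] [IsOrderedAddMonoid F]
    [HasSolidNorm F] [NormedSpace ℝ F]
    [NormedAddCommGroup G] [Lattice G] [IsOrderedAddMonoid G] [HasSolidNorm G] [NormedSpace ℝ G]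
    (J : G →ₗᵢ[ℝ] F) (hJlat : ∀ x y : G, J (x ⊔ y) = J x ⊔ J y)
    (P : F →L[ℝ] F) (hproj : ∀ x, P (P x) = P x) (hrange : Set.range P = Set.range J)
    (hF : HasWDP F) : HasWDP G := by
  intro Y _ _ _ S hS x hdisj hweak
  obtain ⟨Q, hQJ⟩ := J.exists_leftInverse_of_range_eq_range P hproj hrange
  have hSQ := hF Y (S.comp Q) (hS.comp_closedBall Q) (fun n => J (x n))
    (fun n m hnm => abs_inf_abs_map_eq_zero_of_map_sup hJlat (hdisj hnm))
    (hweak.map J.toContinuousLinearMap)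
  simpa only [ContinuousLinearMap.comp_apply, hQJ] using hSQ

/-- If `F` is a Banach lattice with the weak Dunford–Pettis property and `G` is (isometrically,
as a Banach lattice, via `J`) a sublattice of `F` which is the range of a bounded projection
`P : F → F`, then `G` has the weak Dunford–Pettis property. -/
theorem stmt_3 (F G : Type) [NormedAddCommGroup F] [Lattice F] [IsOrderedAddMonoid F]
    [HasSolidNorm F] [NormedSpace ℝ F] [CompleteSpace F]
    [NormedAddCommGroup G] [Lattice G] [IsOrderedAddMonoid G] [HasSolidNorm G] [NormedSpace ℝ G] [CompleteSpace G]
    (J : G →ₗᵢ[ℝ] F) (hJlat : ∀ x y : G, J (x ⊔ y) = J x ⊔ J y)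
    (P : F →L[ℝ] F) (hproj : ∀ x, P (P x) = P x) (hrange : Set.range P = Set.range J)
    (hF : HasWDP F) : HasWDP G :=
  stmt_3_general F G J hJlat P hproj hrange hF
end
end

section
/- The Banach lattice E = (⊕_{n=1}^∞ ℓ_2^n)_{c_0} does not have the weak Dunford–Pettis* property: there exist a weakly null sequence (x_k) in E and a disjoint weak* null sequence (f_k) in E' with f_k(x_k) = 1 for all k. -/
open Filter Topology

noncomputable section

/-- The `n`-th block: the Euclidean lattice `ℓ₂^(n+1)` (so `n` ranges over all positive
dimensions). -/
abbrev Blk (n : ℕ) := EuclideanSpace ℝ (Fin (n + 1))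

/-- Sequences of blocks; the ambient product in which `E`, `E'` and `E''` live. -/
abbrev PreE := ∀ n, Blk n

/-- The coordinatewise (lattice) order. -/
def ele (x y : PreE) : Prop := ∀ n i, x n i ≤ y n i

/-- Membership in `E = (⊕ ℓ₂ⁿ)_{c₀}`: block norms tend to zero. -/
def memE0 (x : PreE) : Prop := Tendsto (fun n => ‖x n‖) atTop (𝓝 0)

/-- Membership in `E' = (⊕ ℓ₂ⁿ)_{ℓ₁}`: block norms are summable. -/
def memE1 (x : PreE) : Prop := Summable fun n => ‖x n‖

/-- The duality pairing `⟨f, x⟩ = Σₙ Σᵢ f n i * x n i`. -/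
def pairE (f x : PreE) : ℝ := ∑' n, ∑ i, f n i * x n i

/-- `E'' = (⊕ ℓ₂ⁿ)_{ℓ_∞}`, the ℓ∞-sum, as a genuine Banach space. -/
abbrev Epp := ↥(lp Blk ⊤)

/-- The diagonal unit vectors: `dg n` is `1` in the last coordinate of block `n`, `0` elsewhere. -/
def dg (n : ℕ) : PreE := fun m => if m = n then EuclideanSpace.single (Fin.last m) 1 else 0

/-! The diagonal unit vectors `dg k` serve both as the weakly null sequence in `E` and as the
weak* null sequence in `E'`. Pairing with `dg k` reads off one coordinate of the `k`-th block,
which is bounded by that block's norm; block norms tend to zero both in `E` (by definition) and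
in `E'` (they are summable), which gives weak and weak* nullity at once. Distinct `dg k` live in
distinct blocks, so they are disjoint, and `⟨dg k, dg k⟩ = 1`. -/

lemma pairE_comm (f x : PreE) : pairE f x = pairE x f := by
  simp only [pairE, mul_comm]

lemma dg_apply_of_ne {k n : ℕ} (h : n ≠ k) : dg k n = 0 := if_neg h

lemma dg_self_apply_last (k : ℕ) : dg k k (Fin.last k) = 1 := by
  simp [dg]

lemma norm_dg_apply (k n : ℕ) : ‖dg k n‖ = if n = k then 1 else 0 := by
  by_cases h : n = k <;> simp [dg, h]

lemma pairE_dg (k : ℕ) (y : PreE) : pairE (dg k) y = y k (Fin.last k) := by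
  rw [pairE, tsum_eq_single k fun n hn => by simp [dg_apply_of_ne hn]]
  simp [dg, PiLp.single_apply]

lemma memE0_dg (k : ℕ) : memE0 (dg k) := by
  refine tendsto_nhds_of_eventually_eq ?_
  filter_upwards [eventually_gt_atTop k] with n hn
  simp [norm_dg_apply, hn.ne']

lemma memE1_dg (k : ℕ) : memE1 (dg k) :=
  summable_of_ne_finset_zero (s := {k}) fun n hn => by
    simp_all [norm_dg_apply]

lemma pairwise_disjoint_dg : Pairwise fun k j => ∀ n i, min |dg k n i| |dg j n i| = 0 := by
  intro k j hkj n i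
  rcases eq_or_ne n k with rfl | hnk
  · simp [dg_apply_of_ne hkj]
  · simp [dg_apply_of_ne hnk]

lemma tendsto_apply_of_tendsto_norm {z : PreE} (hz : Tendsto (fun n => ‖z n‖) atTop (𝓝 0))
    (i : ∀ k, Fin (k + 1)) : Tendsto (fun k => z k (i k)) atTop (𝓝 0) :=
  squeeze_zero_norm (fun k => PiLp.norm_apply_le (z k) (i k)) hz

/-- `E = (⊕ ℓ₂ⁿ)_{c₀}` fails the weak DP* property: there are a weakly null sequence
`(x k)` in `E` and a disjoint weak* null sequence `(f k)` in `E' = (⊕ ℓ₂ⁿ)_{ℓ₁}` with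
`f k (x k) = 1` for all `k`. -/
theorem stmt_4 :
    ∃ x f : ℕ → PreE,
      (∀ k, memE0 (x k)) ∧ (∀ k, memE1 (f k)) ∧
      (∀ g : PreE, memE1 g → Tendsto (fun k => pairE g (x k)) atTop (𝓝 0)) ∧
      (Pairwise fun k j => ∀ n i, min |f k n i| |f j n i| = 0) ∧
      (∀ y : PreE, memE0 y → Tendsto (fun k => pairE (f k) y) atTop (𝓝 0)) ∧
      (∀ k, pairE (f k) (x k) = 1) := by
  refine ⟨dg, dg, memE0_dg, memE1_dg, fun g hg => ?_, pairwise_disjoint_dg, fun y hy => ?_,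
    fun k => ?_⟩
  · simpa only [pairE_comm g, pairE_dg] using
      tendsto_apply_of_tendsto_norm hg.tendsto_atTop_zero Fin.last
  · simpa only [pairE_dg] using tendsto_apply_of_tendsto_norm hy Fin.last
  · rw [pairE_dg, dg_self_apply_last]
end
end

section
/- The Banach lattice E' = (⊕_{n=1}^∞ ℓ_2^n)_{ℓ_1} has the weak Grothendieck property: every disjoint weak* null sequence in E'' is weakly null. -/
/-!
Testing against `ℓ¹` and the uniform boundedness principle bound the sequence, say by `C`.
Disjointness makes the blocks `(F k) n` pairwise orthogonal in `ℓ₂ⁿ`, so for any signs `σ`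
the ℓ^∞-sum gives `‖∑_{k ∈ S} σ k • F k‖ ≤ C √|S|`. For a functional `φ`, choosing `σ k` to be
the sign of `φ (F k)` yields `∑_{k ∈ S} |φ (F k)| ≤ ‖φ‖ C √|S|`; this sublinear growth allows
only finitely many `k` with `|φ (F k)| ≥ ε`.
-/

open Filter Topology

noncomputable section

open scoped RealInnerProductSpace

section WeaklyNull

variable {X : Type*} [NormedAddCommGroup X] [NormedSpace ℝ X]

theorem weaklyNullSeq_of_forall_dual {x : ℕ → X}
    (h : ∀ φ : StrongDual ℝ X, Tendsto (fun k => φ (x k)) atTop (𝓝 0)) : WeaklyNullSeq x :=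
  (WeakBilin.tendsto_iff_forall_eval_tendsto _ fun _ _ hxy =>
    SeparatingDual.eq_iff_forall_dual_eq.2 fun φ => DFunLike.congr_fun hxy φ).2 fun φ =>
      (map_zero φ).symm ▸ h φ

theorem tendsto_zero_of_sq_sum_abs_le {a : ℕ → ℝ} {D : ℝ}
    (h : ∀ S : Finset ℕ, (∑ k ∈ S, |a k|) ^ 2 ≤ D * S.card) : Tendsto a atTop (𝓝 0) := by
  rw [← Nat.cofinite_eq_atTop, Metric.tendsto_nhds]
  intro ε hε
  simp only [Real.dist_eq, sub_zero, ← not_le]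
  refine Set.Finite.eventually_cofinite_notMem (s := {k | ε ≤ |a k|}) ?_
  by_contra hinf
  set N := ⌊D / ε ^ 2⌋₊ + 1
  obtain ⟨S, hST, hS⟩ := Set.Infinite.exists_subset_card_eq hinf N
  have hN : (0 : ℝ) < N := by positivity
  have hsum : N * ε ≤ ∑ k ∈ S, |a k| := by
    simpa [hS] using Finset.card_nsmul_le_sum S (fun k => |a k|) ε fun k hk => hST hk
  have hNε : N * ε ^ 2 ≤ D := by
    have := (pow_le_pow_left₀ (by positivity) hsum 2).trans (h S)
    rw [hS] at this
    nlinarith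
  have : D / ε ^ 2 < N := by simpa [N] using Nat.lt_floor_add_one (D / ε ^ 2)
  rw [div_lt_iff₀ (by positivity)] at this
  linarith

theorem weaklyNullSeq_of_norm_sum_sq_le {x : ℕ → X} {D : ℝ}
    (h : ∀ (S : Finset ℕ) (σ : ℕ → ℝ), (∀ k, |σ k| ≤ 1) →
      ‖∑ k ∈ S, σ k • x k‖ ^ 2 ≤ D * S.card) :
    WeaklyNullSeq x := by
  refine weaklyNullSeq_of_forall_dual fun φ =>
    tendsto_zero_of_sq_sum_abs_le (D := ‖φ‖ ^ 2 * D) fun S => ?_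
  let σ : ℕ → ℝ := fun k => SignType.sign (φ (x k))
  have hσ : ∀ k, |σ k| ≤ 1 := fun k => by
    rcases SignType.trichotomy (SignType.sign (φ (x k))) with h | h | h <;> simp [σ, h]
  have hsum : ∑ k ∈ S, |φ (x k)| = φ (∑ k ∈ S, σ k • x k) := by
    simp [σ, map_sum, sign_mul_self]
  calc (∑ k ∈ S, |φ (x k)|) ^ 2 ≤ (‖φ‖ * ‖∑ k ∈ S, σ k • x k‖) ^ 2 := by
        rw [hsum, ← sq_abs]
        exact pow_le_pow_left₀ (abs_nonneg _) (φ.le_opNorm _) 2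
    _ ≤ ‖φ‖ ^ 2 * (D * S.card) := by
        rw [mul_pow]
        exact mul_le_mul_of_nonneg_left (h S σ hσ) (by positivity)
    _ = ‖φ‖ ^ 2 * D * S.card := by ring

end WeaklyNull

theorem norm_sum_sq_eq_sum_norm_sq_of_pairwise_inner_eq_zero {κ V : Type*}
    [NormedAddCommGroup V] [InnerProductSpace ℝ V] {v : κ → V}
    (hv : Pairwise fun j k => ⟪v j, v k⟫ = 0) (S : Finset κ) :
    ‖∑ k ∈ S, v k‖ ^ 2 = ∑ k ∈ S, ‖v k‖ ^ 2 := by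
  classical
  induction S using Finset.induction_on with
  | empty => simp
  | insert k S hk ih =>
    have horth : ⟪v k, ∑ j ∈ S, v j⟫ = 0 :=
      (inner_sum _ _ _).trans
        (Finset.sum_eq_zero fun j hj => hv (ne_of_mem_of_not_mem hj hk).symm)
    rw [Finset.sum_insert hk, Finset.sum_insert hk, ← ih, sq, sq, sq,
      norm_add_sq_eq_norm_sq_add_norm_sq_real horth]

namespace lp

variable {ι : Type*} {E : ι → Type*} [∀ i, NormedAddCommGroup (E i)]

theorem hasSum_norm_one (g : lp E 1) : HasSum (fun i => ‖(g : ∀ i, E i) i‖) ‖g‖ := by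
  simpa using hasSum_norm (by norm_num) g

variable [∀ i, InnerProductSpace ℝ (E i)]

theorem norm_inner_apply_le (g : lp E 1) (x : lp E ⊤) (i : ι) :
    ‖⟪(g : ∀ i, E i) i, x i⟫‖ ≤ ‖(g : ∀ i, E i) i‖ * ‖x‖ :=
  (norm_inner_le_norm _ _).trans <|
    mul_le_mul_of_nonneg_left (norm_apply_le_norm ENNReal.top_ne_zero x i) (norm_nonneg _)

theorem summable_inner_one_top (g : lp E 1) (x : lp E ⊤) :
    Summable fun i => ⟪(g : ∀ i, E i) i, x i⟫ :=
  .of_norm_bounded ((hasSum_norm_one g).summable.mul_right ‖x‖) (norm_inner_apply_le g x)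

def pairing (x : lp E ⊤) : lp E 1 →L[ℝ] ℝ :=
  LinearMap.mkContinuous
    { toFun := fun g => ∑' i, ⟪(g : ∀ i, E i) i, x i⟫
      map_add' := fun g h => by
        simp only [coeFn_add, Pi.add_apply, inner_add_left]
        exact (summable_inner_one_top g x).tsum_add (summable_inner_one_top h x)
      map_smul' := fun c g => by
        simp only [coeFn_smul, Pi.smul_apply, real_inner_smul_left, RingHom.id_apply, smul_eq_mul]
        exact tsum_mul_left }
    ‖x‖ fun g => by
      rw [mul_comm]
      exact tsum_of_norm_bounded ((hasSum_norm_one g).mul_right ‖x‖) (norm_inner_apply_le g x)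

theorem pairing_apply (x : lp E ⊤) (g : lp E 1) :
    pairing x g = ∑' i, ⟪(g : ∀ i, E i) i, x i⟫ := rfl

theorem norm_apply_le_norm_pairing (x : lp E ⊤) (i : ι) : ‖(x : ∀ i, E i) i‖ ≤ ‖pairing x‖ := by
  classical
  have hself : pairing x (lp.single 1 i (x i)) = ‖(x : ∀ i, E i) i‖ ^ 2 := by
    rw [pairing_apply,
      tsum_eq_single i fun j hj => by rw [lp.single_apply_ne 1 i _ hj, inner_zero_left],
      lp.single_apply_self, real_inner_self_eq_norm_sq]
  have hle := (pairing x).le_opNorm (lp.single 1 i (x i))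
  rw [hself, lp.norm_single (by norm_num), Real.norm_eq_abs, abs_of_nonneg (by positivity)] at hle
  rcases (norm_nonneg ((x : ∀ i, E i) i)).eq_or_lt with h0 | hpos
  · exact h0 ▸ norm_nonneg (pairing x)
  · nlinarith

theorem norm_le_norm_pairing (x : lp E ⊤) : ‖x‖ ≤ ‖pairing x‖ :=
  norm_le_of_forall_le (norm_nonneg (pairing x)) (norm_apply_le_norm_pairing x)

theorem exists_norm_le_of_forall_pairing_le [∀ i, CompleteSpace (E i)] {κ : Type*}
    {x : κ → lp E ⊤} (h : ∀ g : lp E 1, ∃ C, ∀ k, ‖pairing (x k) g‖ ≤ C) :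
    ∃ C, ∀ k, ‖x k‖ ≤ C :=
  let ⟨C, hC⟩ := banach_steinhaus h
  ⟨C, fun k => (norm_le_norm_pairing (x k)).trans (hC k)⟩

theorem norm_sum_smul_sq_le {x : ℕ → lp E ⊤} {C : ℝ}
    (horth : Pairwise fun j k => ∀ i, ⟪(x j : ∀ i, E i) i, x k i⟫ = 0) (hx : ∀ k, ‖x k‖ ≤ C)
    (S : Finset ℕ) {σ : ℕ → ℝ} (hσ : ∀ k, |σ k| ≤ 1) :
    ‖∑ k ∈ S, σ k • x k‖ ^ 2 ≤ C ^ 2 * S.card := by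
  refine (Real.le_sqrt (norm_nonneg _) (by positivity)).1 <|
    norm_le_of_forall_le (Real.sqrt_nonneg _) fun i => Real.le_sqrt_of_sq_le ?_
  have hblock : ∀ k, ‖σ k • (x k : ∀ i, E i) i‖ ≤ C := fun k =>
    calc ‖σ k • (x k : ∀ i, E i) i‖ = |σ k| * ‖(x k : ∀ i, E i) i‖ := by
          rw [norm_smul, Real.norm_eq_abs]
      _ ≤ 1 * ‖x k‖ :=
          mul_le_mul (hσ k) (norm_apply_le_norm ENNReal.top_ne_zero _ i) (norm_nonneg _) zero_le_one
      _ ≤ C := (one_mul ‖x k‖).symm ▸ hx k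
  calc ‖(∑ k ∈ S, σ k • x k : lp E ⊤) i‖ ^ 2 = ‖∑ k ∈ S, σ k • (x k : ∀ i, E i) i‖ ^ 2 := by
        rw [coeFn_sum, Finset.sum_apply]; rfl
    _ = ∑ k ∈ S, ‖σ k • (x k : ∀ i, E i) i‖ ^ 2 :=
        norm_sum_sq_eq_sum_norm_sq_of_pairwise_inner_eq_zero
          (horth.mono fun j k h => by rw [inner_smul_left, inner_smul_right, h i]; simp) S
    _ ≤ ∑ _k ∈ S, C ^ 2 :=
        Finset.sum_le_sum fun k _ => pow_le_pow_left₀ (norm_nonneg _) (hblock k) 2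
    _ = C ^ 2 * S.card := by rw [Finset.sum_const, nsmul_eq_mul, mul_comm]

end lp

theorem EuclideanSpace.inner_eq_zero_of_min_abs_eq_zero {ι : Type*} [Fintype ι]
    {u v : EuclideanSpace ℝ ι} (h : ∀ i, min |u i| |v i| = 0) : ⟪u, v⟫ = 0 := by
  refine (PiLp.inner_apply u v).trans (Finset.sum_eq_zero fun i _ => ?_)
  rcases min_eq_iff.1 (h i) with ⟨hu, -⟩ | ⟨hv, -⟩
  · simp [abs_eq_zero.1 hu]
  · simp [abs_eq_zero.1 hv]

theorem pairE_eq_pairing (g : lp Blk 1) (x : Epp) : pairE g x = lp.pairing x g := by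
  simp [pairE, lp.pairing_apply, PiLp.inner_apply, mul_comm]

/-- `E' = (⊕ ℓ₂ⁿ)_{ℓ₁}` has the weak Grothendieck property: every disjoint sequence in
`E'' = (⊕ ℓ₂ⁿ)_{ℓ∞}` which is weak* null (i.e. null against every `g ∈ E'`) is weakly
null in `E''`. -/
theorem stmt_8 (F : ℕ → Epp)
    (hdisj : Pairwise fun k j => ∀ n i, min |(F k : PreE) n i| |(F j : PreE) n i| = 0)
    (hwstar : ∀ g : PreE, memE1 g → Tendsto (fun k => pairE g (F k)) atTop (𝓝 0)) :
    WeaklyNullSeq F := by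
  obtain ⟨C, hC⟩ : ∃ C, ∀ k, ‖F k‖ ≤ C := lp.exists_norm_le_of_forall_pairing_le fun g => by
    obtain ⟨C, hC⟩ := (hwstar g (lp.hasSum_norm_one g).summable).norm.bddAbove_range
    exact ⟨C, fun k => pairE_eq_pairing g (F k) ▸ hC ⟨k, rfl⟩⟩
  have horth : Pairwise fun j k => ∀ n, ⟪(F j : PreE) n, (F k : PreE) n⟫ = 0 :=
    hdisj.mono fun _ _ h n => EuclideanSpace.inner_eq_zero_of_min_abs_eq_zero (h n)
  exact weaklyNullSeq_of_norm_sum_sq_le fun S _ hσ => lp.norm_sum_smul_sq_le horth hC S hσ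
end
end

section
/- The Banach lattice E' = (⊕_{n=1}^∞ ℓ_2^n)_{ℓ_1} does not have the positive Grothendieck property. -/
/-!
The last coordinates `x ↦ x n (Fin.last n)` of the blocks span a copy of `ℓ₁` in `E'` and of
`ℓ_∞` in `E''`. On this diagonal the tail indicators `1_{[k,∞)}` are positive and weak* null,
because pairing one with `g ∈ E'` gives a tail of the convergent series `∑ₙ g n (Fin.last n)`.
They are not weakly null: the diagonal coordinate functionals have norm `≤ 1`, so by
Banach–Alaoglu they have a weak* cluster point `φ` along `atTop` (a Banach limit on the diagonal),
and `φ` equals `1` on every tail indicator.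
-/

open Filter Topology

noncomputable section

theorem not_weaklyNullSeq_of_tendsto_apply_one {X : Type*} [NormedAddCommGroup X]
    [NormedSpace ℝ X] {x : ℕ → X} (ℓ : ℕ → StrongDual ℝ X) {C : ℝ} (hℓ : ∀ n, ‖ℓ n‖ ≤ C)
    (h : ∀ k, Tendsto (fun n => ℓ n (x k)) atTop (𝓝 1)) : ¬ WeaklyNullSeq x := by
  intro hx
  obtain ⟨φ, -, hφ⟩ := (WeakDual.isCompact_closedBall (0 : StrongDual ℝ X) C).ultrafilter_le_nhds
    ((Ultrafilter.of atTop).map fun n => StrongDual.toWeakDual (ℓ n))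
    (le_principal_iff.2 <| Ultrafilter.mem_map.2 <| univ_mem' fun n => by simpa using hℓ n)
  have hφ_one : ∀ k, φ (x k) = 1 := fun k =>
    tendsto_nhds_unique (((WeakDual.eval_continuous (x k)).tendsto φ).comp hφ)
      ((h k).mono_left (Ultrafilter.of_le _))
  have hφ_zero : Tendsto (fun k => φ (x k)) atTop (𝓝 0) := by
    have hφ_cont : Continuous fun v : WeakSpace ℝ X => φ v :=
      WeakBilin.eval_continuous _ (WeakDual.toStrongDual φ)
    have hlim := (hφ_cont.tendsto 0).comp hx
    rwa [show φ (0 : WeakSpace ℝ X) = 0 from map_zero φ] at hlim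
  simp only [hφ_one] at hφ_zero
  exact one_ne_zero (tendsto_nhds_unique tendsto_const_nhds hφ_zero)

theorem tsum_ite_le_eq_tsum_nat_add {M : Type*} [AddCommMonoid M] [TopologicalSpace M]
    (f : ℕ → M) (k : ℕ) : ∑' n, (if k ≤ n then f n else 0) = ∑' m, f (m + k) := by
  rw [← (add_left_injective k).tsum_eq fun n hn => ?_]
  · exact tsum_congr fun m => if_pos (Nat.le_add_left k m)
  · have hkn : k ≤ n := by_contra fun hkn => hn (if_neg hkn)
    exact ⟨n - k, Nat.sub_add_cancel hkn⟩

def diagCoord (n : ℕ) : StrongDual ℝ Epp :=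
  (EuclideanSpace.proj (Fin.last n)).comp (lp.evalCLM ℝ Blk ⊤ n)

theorem diagCoord_apply (n : ℕ) (x : Epp) : diagCoord n x = (x : PreE) n (Fin.last n) := rfl

theorem norm_diagCoord_le (n : ℕ) : ‖diagCoord n‖ ≤ 1 :=
  ContinuousLinearMap.opNorm_le_bound _ zero_le_one fun x => by
    rw [one_mul, diagCoord_apply]
    exact (PiLp.norm_apply_le _ _).trans (lp.norm_apply_le_norm ENNReal.top_ne_zero x n)

def tailDiag (k : ℕ) : Epp :=
  ⟨fun n => if k ≤ n then EuclideanSpace.single (Fin.last n) 1 else 0, by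
    refine memℓp_infty ⟨1, ?_⟩
    rintro r ⟨n, rfl⟩
    by_cases h : k ≤ n <;> simp [h]⟩

theorem tailDiag_apply (k n : ℕ) :
    (tailDiag k : PreE) n = if k ≤ n then EuclideanSpace.single (Fin.last n) 1 else 0 := rfl

theorem tailDiag_nonneg (k n : ℕ) (i : Fin (n + 1)) : 0 ≤ (tailDiag k : PreE) n i := by
  by_cases h : k ≤ n <;> simp [tailDiag_apply, h, PiLp.single_apply, apply_ite]

theorem diagCoord_tailDiag {k n : ℕ} (h : k ≤ n) : diagCoord n (tailDiag k) = 1 := by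
  simp [diagCoord_apply, tailDiag_apply, h]

theorem pairE_tailDiag (g : PreE) (k : ℕ) :
    pairE g (tailDiag k) = ∑' m, g (m + k) (Fin.last (m + k)) := by
  rw [pairE, ← tsum_ite_le_eq_tsum_nat_add (fun n => g n (Fin.last n))]
  refine tsum_congr fun n => ?_
  by_cases h : k ≤ n <;> simp [tailDiag_apply, h, PiLp.single_apply]

/-- `E' = (⊕ ℓ₂ⁿ)_{ℓ₁}` fails the positive Grothendieck property: there is a positive
sequence in `E'' = (⊕ ℓ₂ⁿ)_{ℓ∞}` which is weak* null (null against every `g ∈ E'`) but not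
weakly null in `E''`. -/
theorem stmt_10 :
    ∃ F : ℕ → Epp,
      (∀ k n i, 0 ≤ (F k : PreE) n i) ∧
      (∀ g : PreE, memE1 g → Tendsto (fun k => pairE g (F k)) atTop (𝓝 0)) ∧
      ¬ WeaklyNullSeq F := by
  refine ⟨tailDiag, tailDiag_nonneg, fun g _ => ?_,
    not_weaklyNullSeq_of_tendsto_apply_one diagCoord norm_diagCoord_le fun k => ?_⟩
  · simpa only [pairE_tailDiag] using tendsto_sum_nat_add fun n => g n (Fin.last n)
  · exact tendsto_const_nhds.congr' <|
      (eventually_ge_atTop k).mono fun n hn => (diagCoord_tailDiag hn).symm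
end
end
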